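/- Let Y_t = E[G | 𝔽_t] be represented (deterministically in the operator part) as Y_t = −e^{(T−t)Aᵀ} E^{𝔽_t}[ξ] + ∫ₜᵀ e^{(s−t)Aᵀ} E^{𝔽_t}[f_s] ds, where ‖A e^{rA} D‖ ≤ C r^{α−1}. If E^{𝔽_t}|ξ| ≤ m₀ and (∫₀ᵀ E^{𝔽_t}|f_s|² ds)^{1/2} ≤ m₁, then for every u ∈ U with ‖u‖ = 1, |⟨Y_t, A e^{(T−t)A} D u⟩| is well-defined and sup_{‖u‖=1} |⟨Dᵀ Aᵀ Y_t, u⟩| ≤ C m₀ (T−t)^{α−1} + C' m₁ T^{α−1/2} with C' = C/(2α−1)^{1/2}. -/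

import Mathlib

/-!
Split the pairing by the triangle inequality. The terminal term is bounded by
`‖ξt‖ ‖A e^{(T−t)A} D‖ ≤ C m₀ (T−t)^{α−1}`. In the forcing term the integrand is bounded by
`C ‖f_s‖ (s−t)^{α−1}`, and Cauchy–Schwarz in `L²(t, T)` separates `‖f‖` from the kernel, whose
square integrates to `(T−t)^{2α−1}/(2α−1)`: finite exactly because `α > 1/2`.
-/

open MeasureTheory Set
open scoped RealInnerProductSpace

lemma abs_inner_apply_le_of_norm_le_one {H U : Type*} [NormedAddCommGroup H]
    [InnerProductSpace ℝ H] [NormedAddCommGroup U] [NormedSpace ℝ U]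
    (x : H) (L : U →L[ℝ] H) {u : U} (hu : ‖u‖ ≤ 1) :
    |⟪x, L u⟫| ≤ ‖x‖ * ‖L‖ :=
  (abs_real_inner_le_norm _ _).trans <|
    mul_le_mul_of_nonneg_left ((L.le_opNorm_of_le hu).trans_eq (mul_one _)) (norm_nonneg x)

theorem integral_mul_le_L2_mul_L2_of_nonneg {α : Type*} [MeasurableSpace α] {μ : Measure α}
    {f g : α → ℝ} (hf : 0 ≤ᵐ[μ] f) (hg : 0 ≤ᵐ[μ] g) (hf2 : MemLp f 2 μ) (hg2 : MemLp g 2 μ) :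
    ∫ a, f a * g a ∂μ ≤ (∫ a, f a ^ 2 ∂μ) ^ (1 / 2 : ℝ) * (∫ a, g a ^ 2 ∂μ) ^ (1 / 2 : ℝ) := by
  simpa [Real.rpow_two] using integral_mul_le_Lp_mul_Lq_of_nonneg Real.HolderConjugate.two_two
    hf hg (by simpa using hf2) (by simpa using hg2)

theorem integral_sub_rpow {γ : ℝ} (hγ : -1 < γ) (t T : ℝ) :
    ∫ s in t..T, (s - t) ^ γ = (T - t) ^ (γ + 1) / (γ + 1) := by
  rw [intervalIntegral.integral_comp_sub_right (fun x => x ^ γ), sub_self,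
    integral_rpow (Or.inl hγ), Real.zero_rpow (by linarith), sub_zero]

lemma rpow_sub_one_sq {x : ℝ} (hx : 0 ≤ x) (β : ℝ) : (x ^ (β - 1)) ^ 2 = x ^ (2 * β - 2) := by
  rw [← Real.rpow_mul_natCast hx]
  ring_nf

section SingularKernel

variable {t T β : ℝ}

theorem memLp_two_sub_rpow (hβ : 1 / 2 < β) :
    MemLp (fun s => (s - t) ^ (β - 1)) 2 (volume.restrict (Ioc t T)) := by
  refine (memLp_two_iff_integrable_sq
    ((measurable_id.sub_const t).pow_const _).aestronglyMeasurable).2 ?_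
  have h := ((intervalIntegral.intervalIntegrable_rpow' (r := 2 * β - 2)
    (by linarith)).comp_sub_right (a := 0) (b := T - t) t).1
  simp only [zero_add, sub_add_cancel] at h
  exact h.congr_fun (fun s hs => (rpow_sub_one_sq (sub_nonneg.2 hs.1.le) β).symm)
    measurableSet_Ioc

theorem setIntegral_sq_sub_rpow (htT : t ≤ T) (hβ : 1 / 2 < β) :
    ∫ s in Ioc t T, ((s - t) ^ (β - 1)) ^ 2 = (T - t) ^ (2 * β - 1) / (2 * β - 1) := by
  rw [setIntegral_congr_fun measurableSet_Ioc
      (fun s hs => rpow_sub_one_sq (sub_nonneg.2 hs.1.le) β),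
    ← intervalIntegral.integral_of_le htT, integral_sub_rpow (by linarith)]
  ring_nf

theorem abs_integral_inner_le_of_norm_le_rpow {H U : Type*} [NormedAddCommGroup H]
    [InnerProductSpace ℝ H] [NormedAddCommGroup U] [NormedSpace ℝ U]
    {f : ℝ → H} {K : ℝ → U →L[ℝ] H} {C : ℝ} {u : U} (htT : t ≤ T) (hβ : 1 / 2 < β)
    (hC : 0 ≤ C) (hK : ∀ r ∈ Ioc 0 (T - t), ‖K r‖ ≤ C * r ^ (β - 1))
    (hf : MemLp f 2 (volume.restrict (Ioc t T))) (hu : ‖u‖ ≤ 1) :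
    |∫ s in t..T, ⟪f s, K (s - t) u⟫| ≤
      C / (2 * β - 1) ^ (1 / 2 : ℝ) * (∫ s in t..T, ‖f s‖ ^ 2) ^ (1 / 2 : ℝ) *
        (T - t) ^ (β - 1 / 2) := by
  set k : ℝ → ℝ := fun s => (s - t) ^ (β - 1)
  have hk_nonneg : 0 ≤ᵐ[volume.restrict (Ioc t T)] k :=
    (ae_restrict_iff' measurableSet_Ioc).2 <| ae_of_all _ fun s hs =>
      Real.rpow_nonneg (sub_nonneg.2 hs.1.le) _
  have hpointwise : ∀ s ∈ Ioc t T, ‖⟪f s, K (s - t) u⟫‖ ≤ C * (‖f s‖ * k s) := fun s hs => by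
    have hr : s - t ∈ Ioc 0 (T - t) := ⟨sub_pos.2 hs.1, by linarith [hs.2]⟩
    calc ‖⟪f s, K (s - t) u⟫‖ ≤ ‖f s‖ * ‖K (s - t)‖ :=
          abs_inner_apply_le_of_norm_le_one _ _ hu
      _ ≤ ‖f s‖ * (C * k s) := by gcongr; exact hK _ hr
      _ = C * (‖f s‖ * k s) := by ring
  have hkernel : (∫ s in Ioc t T, k s ^ 2) ^ (1 / 2 : ℝ) =
      (T - t) ^ (β - 1 / 2) / (2 * β - 1) ^ (1 / 2 : ℝ) := by
    rw [setIntegral_sq_sub_rpow htT hβ, Real.div_rpow (by positivity : (0:ℝ) ≤ _) (by linarith),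
      ← Real.rpow_mul (sub_nonneg.2 htT)]
    ring_nf
  calc |∫ s in t..T, ⟪f s, K (s - t) u⟫|
      ≤ |∫ s in t..T, C * (‖f s‖ * k s)| := by
        refine intervalIntegral.norm_integral_le_abs_of_norm_le
          (f := fun s => ⟪f s, K (s - t) u⟫) ?_ ?_
        · rw [uIoc_of_le htT]
          exact (ae_restrict_iff' measurableSet_Ioc).2 (ae_of_all _ hpointwise)
        · rw [intervalIntegrable_iff_integrableOn_Ioc_of_le htT]
          exact (hf.norm.integrable_mul (memLp_two_sub_rpow hβ)).const_mul C
    _ = C * ∫ s in Ioc t T, ‖f s‖ * k s := by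
        rw [intervalIntegral.integral_of_le htT, integral_const_mul, abs_of_nonneg]
        exact mul_nonneg hC (integral_nonneg_of_ae
          (hk_nonneg.mono fun s hs => mul_nonneg (norm_nonneg _) hs))
    _ ≤ C * ((∫ s in Ioc t T, ‖f s‖ ^ 2) ^ (1 / 2 : ℝ) *
          (∫ s in Ioc t T, k s ^ 2) ^ (1 / 2 : ℝ)) :=
        mul_le_mul_of_nonneg_left (integral_mul_le_L2_mul_L2_of_nonneg
          (ae_of_all _ fun s => norm_nonneg (f s)) hk_nonneg hf.norm (memLp_two_sub_rpow hβ)) hC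
    _ = _ := by
        rw [hkernel, ← intervalIntegral.integral_of_le htT]
        ring

end SingularKernel

/-- `AD r` stands for `A e^{rA} D`, and `ξt`, `ft` for the conditional expectations `E^{𝔽_t}[ξ]`
and `s ↦ E^{𝔽_t}[f_s]`; the pairing `−⟪ξt, AD (T−t) u⟫ + ∫ₜᵀ ⟪ft s, AD (s−t) u⟫ ds` is
`⟪Dᵀ Aᵀ Y_t, u⟫`. -/
theorem stmt14_general {H U : Type*} [NormedAddCommGroup H] [InnerProductSpace ℝ H]
    [NormedAddCommGroup U] [InnerProductSpace ℝ U]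
    (T t α C m₀ m₁ : ℝ) (ht0 : 0 ≤ t) (htT : t < T)
    (hα : 1 / 2 < α) (hC : 0 < C) (hm₀ : 0 ≤ m₀) (hm₁ : 0 ≤ m₁)
    (AD : ℝ → U →L[ℝ] H)
    (hAD : ∀ r ∈ Set.Ioc (0:ℝ) T, ‖AD r‖ ≤ C * r ^ (α - 1))
    (ξt : H) (ft : ℝ → H)
    (hξ : ‖ξt‖ ≤ m₀) (hf : (∫ s in t..T, ‖ft s‖ ^ 2) ^ ((1:ℝ)/2) ≤ m₁)
    (hfi : IntervalIntegrable ft volume t T)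
    (hfi2 : IntervalIntegrable (fun s => ‖ft s‖ ^ 2) volume t T) :
    ∀ u : U, ‖u‖ = 1 →
      |(-⟪ξt, AD (T - t) u⟫ + ∫ s in t..T, ⟪ft s, AD (s - t) u⟫)| ≤
        C * m₀ * (T - t) ^ (α - 1) +
          (C / (2 * α - 1) ^ ((1:ℝ)/2)) * m₁ * T ^ (α - 1/2) := by
  intro u hu
  have hterminal : |⟪ξt, AD (T - t) u⟫| ≤ C * m₀ * (T - t) ^ (α - 1) :=
    calc |⟪ξt, AD (T - t) u⟫| ≤ ‖ξt‖ * ‖AD (T - t)‖ :=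
          abs_inner_apply_le_of_norm_le_one _ _ hu.le
      _ ≤ m₀ * (C * (T - t) ^ (α - 1)) := by
          gcongr
          exact hAD _ ⟨sub_pos.2 htT, by linarith⟩
      _ = C * m₀ * (T - t) ^ (α - 1) := by ring
  have hforcing := abs_integral_inner_le_of_norm_le_rpow htT.le hα hC.le
    (fun r hr => hAD r ⟨hr.1, hr.2.trans (by linarith)⟩)
    ((memLp_two_iff_integrable_sq_norm hfi.1.aestronglyMeasurable).2 hfi2.1) hu.le
  have hconst : 0 ≤ C / (2 * α - 1) ^ (1 / 2 : ℝ) :=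
    div_nonneg hC.le (Real.rpow_nonneg (by linarith) _)
  have hhorizon : (T - t) ^ (α - 1 / 2) ≤ T ^ (α - 1 / 2) :=
    Real.rpow_le_rpow (sub_nonneg.2 htT.le) (by linarith) (by linarith)
  calc |(-⟪ξt, AD (T - t) u⟫ + ∫ s in t..T, ⟪ft s, AD (s - t) u⟫)|
      ≤ |⟪ξt, AD (T - t) u⟫| + |∫ s in t..T, ⟪ft s, AD (s - t) u⟫| :=
        (abs_add_le _ _).trans_eq (by rw [abs_neg])
    _ ≤ _ := by
        gcongr
        exact hforcing.trans (by gcongr)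

/-- `Sadj r` represents `e^{r Aᵀ}`, `AD r` represents `A e^{rA} D` with the bound
`‖AD r‖ ≤ C r^{α−1}`, and the adjoint/semigroup relation
`⟪e^{rAᵀ} x, A e^{sA} D u⟫ = ⟪x, A e^{(r+s)A} D u⟫` holds. `ξt` and `ft` stand for the
conditional expectations `E^{𝔽_t}[ξ]` and `s ↦ E^{𝔽_t}[f_s]`, and
`Y = −e^{(T−t)Aᵀ} ξt + ∫ₜᵀ e^{(s−t)Aᵀ} ft s ds`.  The pairing
`u ↦ −⟪ξt, AD (T−t) u⟫ + ∫ₜᵀ ⟪ft s, AD (s−t) u⟫ ds` represents `u ↦ ⟪Dᵀ Aᵀ Y, u⟫`. -/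
theorem stmt14 {H U : Type*} [NormedAddCommGroup H] [InnerProductSpace ℝ H]
    [NormedAddCommGroup U] [InnerProductSpace ℝ U] [CompleteSpace H]
    (T t α C m₀ m₁ : ℝ) (hT : 0 < T) (ht0 : 0 ≤ t) (htT : t < T)
    (hα : 1 / 2 < α) (hα1 : α < 1) (hC : 0 < C) (hm₀ : 0 ≤ m₀) (hm₁ : 0 ≤ m₁)
    (Sadj : ℝ → H →L[ℝ] H) (AD : ℝ → U →L[ℝ] H)
    (hAD : ∀ r ∈ Set.Ioc (0:ℝ) T, ‖AD r‖ ≤ C * r ^ (α - 1))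
    (hadj : ∀ r s : ℝ, ∀ x : H, ∀ u : U, ⟪Sadj r x, AD s u⟫ = ⟪x, AD (r + s) u⟫)
    (ξt : H) (ft : ℝ → H) (Y : H)
    (hY : Y = -Sadj (T - t) ξt + ∫ s in t..T, Sadj (s - t) (ft s))
    (hξ : ‖ξt‖ ≤ m₀) (hf : (∫ s in t..T, ‖ft s‖ ^ 2) ^ ((1:ℝ)/2) ≤ m₁)
    (hfi : IntervalIntegrable ft volume t T)
    (hfi2 : IntervalIntegrable (fun s => ‖ft s‖ ^ 2) volume t T) :
    ∀ u : U, ‖u‖ = 1 →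
      |(-⟪ξt, AD (T - t) u⟫ + ∫ s in t..T, ⟪ft s, AD (s - t) u⟫)| ≤
        C * m₀ * (T - t) ^ (α - 1) +
          (C / (2 * α - 1) ^ ((1:ℝ)/2)) * m₁ * T ^ (α - 1/2) :=
  stmt14_general T t α C m₀ m₁ ht0 htT hα hC hm₀ hm₁ AD hAD ξt ft hξ hf hfi hfi2
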